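/- For a ∈ (1/2, 1), the function h₄(a) = (1−a)[ψ(2−a) − ψ(3/2−a)] admits the series representation h₄(a) = Σ_{n=0}^∞ (1−a)/[(n+2−a)(2n+3−2a)], and h₄ is strictly decreasing on [1/2, 1) with h₄(1/2) = 1 − log 2 and h₄(1⁻) = 0. -/

import Mathlib

open Real Filter Set

noncomputable def poch (x : ℝ) (n : ℕ) : ℝ := (ascPochhammer ℝ n).eval x

noncomputable def hyp (a b c x : ℝ) : ℝ :=
  ∑' n : ℕ, poch a n * poch b n / (poch c n * n.factorial) * x ^ n

noncomputable def digamma (x : ℝ) : ℝ := deriv Real.Gamma x / Real.Gamma x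

noncomputable def h4 (a : ℝ) : ℝ := (1 - a) * (digamma (2 - a) - digamma (3 / 2 - a))

namespace Stmt9Aux

noncomputable def D (x : ℝ) : ℝ := deriv (fun y => Real.log (Real.Gamma y)) x

lemma diffAt_Gamma {x : ℝ} (hx : 0 < x) : DifferentiableAt ℝ Real.Gamma x :=
  Real.differentiableAt_Gamma fun m => by
    intro h; rw [h] at hx
    have : (0:ℝ) ≤ m := m.cast_nonneg
    linarith

lemma diffAt_f {x : ℝ} (hx : 0 < x) :
    DifferentiableAt ℝ (fun y => Real.log (Real.Gamma y)) x :=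
  (diffAt_Gamma hx).log (Real.Gamma_pos_of_pos hx).ne'

lemma digamma_eq {x : ℝ} (hx : 0 < x) : digamma x = D x := by
  rw [digamma, D, deriv.log (diffAt_Gamma hx) (Real.Gamma_pos_of_pos hx).ne']

lemma D_rec {x : ℝ} (hx : 0 < x) : D (x + 1) = D x + 1 / x := by
  rw [D, D, ← deriv_comp_add_const, one_div, ← Real.deriv_log,
    ← deriv_add (diffAt_f (by positivity)) (Real.differentiableAt_log hx.ne')]
  apply Filter.EventuallyEq.deriv_eq
  filter_upwards [eventually_gt_nhds hx] with y hy
  simp only [Real.Gamma_add_one hy.ne',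
    Real.log_mul hy.ne' (Real.Gamma_pos_of_pos hy).ne', add_comm]
  rfl

lemma D_mono : MonotoneOn D (Set.Ioi 0) :=
  Real.convexOn_log_Gamma.monotoneOn_deriv fun x hx => diffAt_f hx

lemma hasSum_D_sub {x y : ℝ} (hx : 0 < x) (hxy : x ≤ y) (hyx : y ≤ x + 1) :
    HasSum (fun n : ℕ => 1 / (x + n) - 1 / (y + n)) (D y - D x) := by
  have hy : 0 < y := hx.trans_le hxy
  have hnonneg : ∀ n : ℕ, 0 ≤ 1 / (x + n) - 1 / (y + n) := by
    intro n
    have h1 : (0:ℝ) < x + n := by positivity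
    have h2 : x + n ≤ y + n := by linarith
    have := one_div_le_one_div_of_le h1 h2
    linarith
  have hpart : ∀ n : ℕ, ∑ k ∈ Finset.range n, (1 / (x + k) - 1 / (y + k))
      = (D y - D x) + (D (x + n) - D (y + n)) := by
    intro n
    induction n with
    | zero => simp
    | succ n ih =>
      rw [Finset.sum_range_succ, ih]
      have e1 : x + ((n : ℝ) + 1) = (x + n) + 1 := by ring
      have e2 : y + ((n : ℝ) + 1) = (y + n) + 1 := by ring
      push_cast
      rw [e1, e2, D_rec (by positivity), D_rec (by positivity)]
      ring
  have hdiffle : ∀ n : ℕ, D (x + n) - D (y + n) ≤ 0 := by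
    intro n
    have := D_mono (by simp only [Set.mem_Ioi]; positivity : x + (n:ℝ) ∈ Set.Ioi 0)
      (by simp only [Set.mem_Ioi]; positivity : y + (n:ℝ) ∈ Set.Ioi 0) (by linarith)
    linarith
  have hdiffge : ∀ n : ℕ, -(1 / (x + n)) ≤ D (x + n) - D (y + n) := by
    intro n
    have h1 : D (y + n) ≤ D (x + n + 1) :=
      D_mono (by simp only [Set.mem_Ioi]; positivity : y + (n:ℝ) ∈ Set.Ioi 0)
        (by simp only [Set.mem_Ioi]; positivity : x + (n:ℝ) + 1 ∈ Set.Ioi 0) (by linarith)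
    have h2 : D (x + n + 1) = D (x + n) + 1 / (x + n) := D_rec (by positivity)
    linarith
  have hsummable : Summable (fun n : ℕ => 1 / (x + n) - 1 / (y + n)) := by
    apply summable_of_sum_range_le hnonneg (c := D y - D x)
    intro n
    rw [hpart n]
    have := hdiffle n
    linarith
  have hlim : Filter.Tendsto (fun n : ℕ => ∑ k ∈ Finset.range n, (1 / (x + k) - 1 / (y + k)))
      Filter.atTop (nhds (D y - D x)) := by
    simp only [hpart]
    have hz : Filter.Tendsto (fun n : ℕ => D (x + n) - D (y + n)) Filter.atTop (nhds 0) := by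
      apply tendsto_of_tendsto_of_tendsto_of_le_of_le (g := fun n : ℕ => -(1 / (x + n)))
        (h := fun _ : ℕ => (0:ℝ))
      · have hT : Filter.Tendsto (fun n : ℕ => x + (n:ℝ)) Filter.atTop Filter.atTop :=
          Filter.tendsto_atTop_add_const_left _ x tendsto_natCast_atTop_atTop
        simpa [one_div, Function.comp_def] using (tendsto_inv_atTop_zero.comp hT).neg
      · exact tendsto_const_nhds
      · exact hdiffge
      · exact hdiffle
    simpa using tendsto_const_nhds.add hz
  have := hsummable.hasSum
  rwa [tendsto_nhds_unique this.tendsto_sum_nat hlim] at this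

lemma hasSum_h4 {a : ℝ} (ha : a < 1) :
    HasSum (fun n : ℕ => (1 - a) / (((n : ℝ) + 2 - a) * (2 * (n:ℝ) + 3 - 2 * a))) (h4 a) := by
  have hx : 0 < 3 / 2 - a := by linarith
  have hy : 0 < 2 - a := by linarith
  have h := (hasSum_D_sub hx (by linarith : 3/2 - a ≤ 2 - a) (by linarith)).mul_left (1 - a)
  have hh : h4 a = (1 - a) * (D (2 - a) - D (3 / 2 - a)) := by
    rw [h4, digamma_eq hy, digamma_eq hx]
  rw [hh]
  refine h.congr_fun fun n => ?_
  have hn : (0:ℝ) ≤ n := n.cast_nonneg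
  have h1 : (0:ℝ) < 3/2 - a + n := by positivity
  have h2 : (0:ℝ) < 2 - a + n := by positivity
  have h3 : (0:ℝ) < ((n:ℝ) + 2 - a) := by linarith
  have h4 : (0:ℝ) < (2 * (n:ℝ) + 3 - 2 * a) := by linarith
  rw [div_sub_div _ _ h1.ne' h2.ne', mul_div_assoc',
    div_eq_div_iff (mul_pos h3 h4).ne' (by positivity)]
  ring

lemma term_lt {a b : ℝ} (ha : 1/2 ≤ a) (hab : a < b) (hb : b < 1) (n : ℕ) :
    (1 - b) / (((n : ℝ) + 2 - b) * (2 * (n:ℝ) + 3 - 2 * b))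
      < (1 - a) / (((n : ℝ) + 2 - a) * (2 * (n:ℝ) + 3 - 2 * a)) := by
  have hn : (0:ℝ) ≤ n := n.cast_nonneg
  have pa : (0:ℝ) < ((n:ℝ) + 2 - a) * (2 * (n:ℝ) + 3 - 2 * a) :=
    mul_pos (by linarith) (by linarith)
  have pb : (0:ℝ) < ((n:ℝ) + 2 - b) * (2 * (n:ℝ) + 3 - 2 * b) :=
    mul_pos (by linarith) (by linarith)
  rw [div_lt_div_iff₀ pb pa]
  have h5 : (0:ℝ) < b - a := by linarith
  have h8 : (1 - a) * (1 - b) ≤ 1/4 := by nlinarith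
  nlinarith [mul_le_mul_of_nonneg_left h8 h5.le, mul_nonneg hn hn,
    mul_nonneg (mul_nonneg hn hn) h5.le, mul_nonneg hn h5.le]

lemma term_le_aux {a : ℝ} (ha : 1/2 ≤ a) (hb : a < 1) (n : ℕ) :
    (1 - a) / (((n : ℝ) + 2 - a) * (2 * (n:ℝ) + 3 - 2 * a)) ≤ (1 - a) * (1/((n:ℝ)+1)^2) := by
  have hn : (0:ℝ) ≤ n := n.cast_nonneg
  have h1 : (0:ℝ) < ((n:ℝ)+1)^2 := by positivity
  have h2 : ((n:ℝ)+1)^2 ≤ ((n:ℝ) + 2 - a) * (2 * (n:ℝ) + 3 - 2 * a) := by nlinarith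
  rw [mul_one_div]
  exact div_le_div_of_nonneg_left (by linarith) h1 h2

lemma summable_aux : Summable (fun n : ℕ => 1/((n:ℝ)+1)^2) := by
  have h : Summable (fun n : ℕ => 1/((n:ℝ))^2) := by
    simpa using Real.summable_one_div_nat_pow.mpr (le_refl 2)
  have := (summable_nat_add_iff 1).mpr h
  refine this.congr fun n => ?_
  push_cast
  ring

end Stmt9Aux

open Stmt9Aux
theorem stmt9 :
    (∀ a ∈ Set.Ioo (1 / 2 : ℝ) 1,
      h4 a = ∑' n : ℕ, (1 - a) / (((n : ℝ) + 2 - a) * (2 * (n : ℝ) + 3 - 2 * a))) ∧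
    StrictAntiOn h4 (Set.Ico (1 / 2) 1) ∧
    h4 (1 / 2) = 1 - Real.log 2 ∧
    Filter.Tendsto h4 (nhdsWithin 1 (Set.Iio 1)) (nhds 0) := by
  refine ⟨fun a ha => (hasSum_h4 ha.2).tsum_eq.symm, ?_, ?_, ?_⟩
  · intro a ha b hb hab
    rw [← (hasSum_h4 ha.2).tsum_eq, ← (hasSum_h4 hb.2).tsum_eq]
    exact Summable.tsum_lt_tsum (i := 0) (fun n => (term_lt ha.1 hab hb.2 n).le)
      (term_lt ha.1 hab hb.2 0) (hasSum_h4 hb.2).summable (hasSum_h4 ha.2).summable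
  · have hd1 : digamma 1 = -Real.eulerMascheroniConstant := by
      rw [digamma, Real.hasDerivAt_Gamma_one.deriv, Real.Gamma_one, div_one]
    have hsp : Real.sqrt π ≠ 0 := by positivity
    have hdhalf : digamma (1/2) = -(Real.eulerMascheroniConstant + 2 * Real.log 2) := by
      rw [digamma, Real.hasDerivAt_Gamma_one_half.deriv, Real.Gamma_one_half_eq]
      field_simp
    have hd32 : digamma (3/2) = digamma (1/2) + 2 := by
      have e : (3/2 : ℝ) = 1/2 + 1 := by norm_num
      rw [e, digamma_eq (by norm_num : (0:ℝ) < 1/2 + 1), D_rec one_half_pos,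
        ← digamma_eq one_half_pos]
      norm_num
    rw [h4, show (2 : ℝ) - 1/2 = 3/2 by norm_num, show (3:ℝ)/2 - 1/2 = 1 by norm_num,
      hd32, hdhalf, hd1]
    ring
  · have hC := summable_aux
    set C : ℝ := ∑' n : ℕ, 1/((n:ℝ)+1)^2 with hCdef
    have hupper : ∀ a ∈ Set.Ioo (1/2 : ℝ) 1, h4 a ≤ (1 - a) * C := by
      intro a ha
      rw [← (hasSum_h4 ha.2).tsum_eq, hCdef, ← tsum_mul_left]
      exact Summable.tsum_le_tsum (term_le_aux ha.1.le ha.2) (hasSum_h4 ha.2).summable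
        (hC.mul_left _)
    have hlower : ∀ a ∈ Set.Ioo (1/2 : ℝ) 1, 0 ≤ h4 a := by
      intro a ha
      refine (hasSum_h4 ha.2).nonneg fun n => ?_
      have hn : (0:ℝ) ≤ n := n.cast_nonneg
      have h1 : (0:ℝ) < (n:ℝ) + 2 - a := by linarith [ha.2]
      have h2 : (0:ℝ) < 2 * (n:ℝ) + 3 - 2 * a := by linarith [ha.2]
      exact div_nonneg (by linarith [ha.2]) (mul_pos h1 h2).le
    have hmem : Set.Ioo (1/2 : ℝ) 1 ∈ nhdsWithin 1 (Set.Iio 1) :=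
      Ioo_mem_nhdsLT_of_mem (by norm_num : (1:ℝ) ∈ Set.Ioc (1/2) 1)
    have htend : Filter.Tendsto (fun a : ℝ => (1 - a) * C) (nhdsWithin 1 (Set.Iio 1)) (nhds 0) := by
      have : Filter.Tendsto (fun a : ℝ => (1 - a) * C) (nhds 1) (nhds ((1 - 1) * C)) :=
        (Filter.Tendsto.const_sub _ Filter.tendsto_id).mul_const _
      simpa using this.mono_left nhdsWithin_le_nhds
    apply tendsto_of_tendsto_of_tendsto_of_le_of_le' tendsto_const_nhds htend
    · filter_upwards [hmem] with a ha using hlower a ha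
    · filter_upwards [hmem] with a ha using hupper a ha
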